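/- Let t be a tensor reduced monoidal t-structure on a monoidal triangulated category T. Then H^i_t(𝟙) = 0 for all i ≠ 0, and hence the unit object 𝟙 lies in the heart H_t, with 𝟙 ≅ H^0_t(𝟙). -/

import Mathlib

/-!
If `X ⊗ X ≅ X` (e.g. `X = 𝟙`) and `H^m(X) ≠ 0`, the Künneth formula exhibits
`H^m(X) ⊗ H^m(X)` as a factor of `H^{2m}(X)`, and tensor reducedness of the heart makes it
nonzero. So the degrees in which `H^*(X)` is nonzero are closed under doubling; as `t` is
bounded they form a bounded set of integers, which must then be contained in `{0}`.
An object of bounded amplitude with cohomology concentrated in degree `0` lies in the heart.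
-/

open CategoryTheory Category Limits Pretriangulated Triangulated MonoidalCategory

namespace Paper

variable (C : Type*) [Category C] [Preadditive C] [HasZeroObject C] [HasShift C ℤ]
  [∀ n : ℤ, (shiftFunctor C n).Additive] [Pretriangulated C]

/-- Truncation and cohomology data for a t-structure `t`: the truncation functors
`τ^{≤ n}`, `τ^{≥ n}` together with the natural maps `τ^{≤ n} X ⟶ X ⟶ τ^{≥ n+1} X`
and the connecting maps forming distinguished truncation triangles. -/
structure TruncData (t : TStructure C) where
  τle : ℤ → C ⥤ C
  τge : ℤ → C ⥤ C
  τle_mem (n : ℤ) (X : C) : t.le n ((τle n).obj X)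
  τge_mem (n : ℤ) (X : C) : t.ge n ((τge n).obj X)
  ι (n : ℤ) : τle n ⟶ 𝟭 C
  π (n : ℤ) : 𝟭 C ⟶ τge n
  δ (n : ℤ) (X : C) : (τge (n + 1)).obj X ⟶ ((τle n).obj X)⟦(1 : ℤ)⟧
  triangle_mem (n : ℤ) (X : C) :
    Triangle.mk ((ι n).app X) ((π (n + 1)).app X) (δ n X) ∈ distTriang C

variable {C}

/-- The cohomological functor `H^n_t := Σ^n ∘ τ^{≤ n} ∘ τ^{≥ n}`, valued in the heart. -/
def TruncData.H {t : TStructure C} (d : TruncData C t) (n : ℤ) : C ⥤ C :=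
  d.τge n ⋙ d.τle n ⋙ shiftFunctor C n

/-- The heart `D^{≤ 0} ∩ D^{≥ 0}` of a t-structure. -/
def Heart (t : TStructure C) (X : C) : Prop := t.le 0 X ∧ t.ge 0 X

/-- A t-structure is bounded if every object lies in some `D^{≤ b} ∩ D^{≥ a}`. -/
def IsBounded (t : TStructure C) : Prop := ∀ X : C, ∃ a b : ℤ, t.le b X ∧ t.ge a X


section Monoidal

variable (C) [MonoidalCategory C]

/-- A monoidal triangulated category: the tensor product is exact in each variable,
with compatibility isomorphisms `Σ(X) ⊗ Y ≅ Σ(X ⊗ Y)` and `X ⊗ Σ(Y) ≅ Σ(X ⊗ Y)`. -/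
class MonoidalTriangulated where
  shiftTensor (n : ℤ) (X Y : C) : ((X⟦n⟧) ⊗ Y) ≅ ((X ⊗ Y)⟦n⟧)
  tensorShift (n : ℤ) (X Y : C) : (X ⊗ (Y⟦n⟧)) ≅ ((X ⊗ Y)⟦n⟧)
  whiskerLeft_distinguished (X : C) (T : Triangle C) (hT : T ∈ distTriang C) :
    Triangle.mk (X ◁ T.mor₁) (X ◁ T.mor₂)
      ((X ◁ T.mor₃) ≫ (tensorShift 1 X T.obj₁).hom) ∈ distTriang C
  whiskerRight_distinguished (Y : C) (T : Triangle C) (hT : T ∈ distTriang C) :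
    Triangle.mk (T.mor₁ ▷ Y) (T.mor₂ ▷ Y)
      ((T.mor₃ ▷ Y) ≫ (shiftTensor 1 T.obj₁ Y).hom) ∈ distTriang C

/-- The deviation of the `k`-shifted t-structure `Σ^{-k} t = (D^{≤ k}, D^{≥ k+1})`:
the set of integers `n` with `D^{≤ k} ⊗ D^{≤ k+n} ⊆ D^{≤ k}` and
`D^{≥ k} ⊗ D^{≥ k+n} ⊆ D^{≥ k}`.  The deviation of `t` itself is `dev C t 0`. -/
def dev (t : TStructure C) (k : ℤ) : Set ℤ :=
  {n | (∀ X Y : C, t.le k X → t.le (k + n) Y → t.le k (X ⊗ Y)) ∧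
       (∀ X Y : C, t.ge k X → t.ge (k + n) Y → t.ge k (X ⊗ Y))}

variable {C}

/-- The Künneth formula: `H^n(X ⊗ Y)` is the (bi)product `⊕_{p+q=n} H^p(X) ⊗ H^q(Y)`
(all but finitely many summands are zero, so the product is the coproduct). -/
def Kunneth {t : TStructure C} (d : TruncData C t) : Prop :=
  ∀ (n : ℤ) (X Y : C),
    ∃ p : ∀ q : ℤ, ((d.H n).obj (X ⊗ Y)) ⟶ (((d.H q).obj X) ⊗ ((d.H (n - q)).obj Y)),
      Nonempty (IsLimit (Fan.mk ((d.H n).obj (X ⊗ Y)) p))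

variable (C) in
/-- A monoidal additive category is tensor reduced if `X ⊗ X = 0` implies `X = 0`. -/
def TensorReducedCat : Prop := ∀ X : C, IsZero (X ⊗ X) → IsZero X

/-- A monoidal t-structure is tensor reduced if its heart is: for `X` in the heart,
`X ⊗ X = 0` implies `X = 0`. -/
def TensorReduced (t : TStructure C) : Prop :=
  ∀ X : C, Heart t X → IsZero (X ⊗ X) → IsZero X

end Monoidal

lemma eq_zero_of_mem_of_two_mul_mem {S : Set ℤ} (hbelow : BddBelow S) (habove : BddAbove S)
    (hS : ∀ m ∈ S, 2 * m ∈ S) {m : ℤ} (hm : m ∈ S) : m = 0 := by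
  have hne : S.Nonempty := ⟨m, hm⟩
  have hinf : sInf S ≤ 2 * sInf S := csInf_le hbelow (hS _ (Int.csInf_mem hne hbelow))
  have hsup : 2 * sSup S ≤ sSup S := le_csSup habove (hS _ (Int.csSup_mem hne habove))
  have := csInf_le hbelow hm
  have := le_csSup habove hm
  omega

lemma isZero_of_isLimit_fan {C : Type*} [Category C] [HasZeroMorphisms C] {ι : Type*}
    {f : ι → C} {c : Fan f} (hc : IsLimit c) (hpt : IsZero c.pt) (i : ι) : IsZero (f i) := by
  classical
  rw [IsZero.iff_id_eq_zero]
  simpa [hpt.eq_of_tgt (Fan.IsLimit.lift hc (Pi.single i (𝟙 (f i)))) 0] using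
    (Fan.IsLimit.fac hc (Pi.single i (𝟙 (f i))) i).symm

namespace TruncData

variable {C : Type*} [Category C] [Preadditive C] [HasZeroObject C] [HasShift C ℤ]
  [∀ n : ℤ, (shiftFunctor C n).Additive] [Pretriangulated C]
  {t : TStructure C} (d : TruncData C t) {X : C}

lemma le_τge_obj {m n : ℤ} (hX : t.le m X) (h : n ≤ m + 1) : t.le m ((d.τge (n + 1)).obj X) :=
  (t.isLE₂ _ (rot_of_distTriang _ (d.triangle_mem n X)) m ⟨hX⟩
    ⟨t.le_monotone (by omega) _ (t.le_shift n 1 (n - 1) (by omega) _ (d.τle_mem n X))⟩).le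

lemma ge_τle_obj {m n : ℤ} (hX : t.ge m X) (h : m ≤ n + 2) : t.ge m ((d.τle n).obj X) :=
  (t.isGE₂ _ (inv_rot_of_distTriang _ (d.triangle_mem n X)) m
    ⟨t.ge_antitone (by omega) _ (t.ge_shift (n + 1) (-1) (n + 2) (by omega) _ (d.τge_mem _ X))⟩
    ⟨hX⟩).ge

lemma isZero_τge_of_le {n : ℤ} (hX : t.le n X) : IsZero ((d.τge (n + 1)).obj X) :=
  (IsZero.iff_id_eq_zero _).2 (t.zero_of_isLE_of_isGE _ n (n + 1) (by omega)
    ⟨d.le_τge_obj hX (by omega)⟩ ⟨d.τge_mem _ X⟩)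

lemma isZero_τle_of_ge {n : ℤ} (hX : t.ge (n + 1) X) : IsZero ((d.τle n).obj X) :=
  (IsZero.iff_id_eq_zero _).2 (t.zero_of_isLE_of_isGE _ n (n + 1) (by omega)
    ⟨d.τle_mem n X⟩ ⟨d.ge_τle_obj hX (by omega)⟩)

lemma le_iff_isZero_τge (n : ℤ) (X : C) : t.le n X ↔ IsZero ((d.τge (n + 1)).obj X) := by
  refine ⟨d.isZero_τge_of_le, fun h => ?_⟩
  have : IsIso ((d.ι n).app X) := (Triangle.isZero₃_iff_isIso₁ _ (d.triangle_mem n X)).1 h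
  exact (t.le n).prop_of_iso (asIso ((d.ι n).app X)) (d.τle_mem n X)

lemma ge_iff_isZero_τle (n : ℤ) (X : C) : t.ge (n + 1) X ↔ IsZero ((d.τle n).obj X) := by
  refine ⟨d.isZero_τle_of_ge, fun h => ?_⟩
  have : IsIso ((d.π (n + 1)).app X) :=
    (Triangle.isZero₁_iff_isIso₂ _ (d.triangle_mem n X)).1 h
  exact (t.ge (n + 1)).prop_of_iso (asIso ((d.π (n + 1)).app X)).symm (d.τge_mem _ X)

lemma isIso_ι_of_le {n : ℤ} (hX : t.le n X) : IsIso ((d.ι n).app X) :=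
  (Triangle.isZero₃_iff_isIso₁ _ (d.triangle_mem n X)).1 (d.isZero_τge_of_le hX)

lemma isIso_π_of_ge {n : ℤ} (hX : t.ge n X) : IsIso ((d.π n).app X) := by
  obtain ⟨k, rfl⟩ : ∃ k, n = k + 1 := ⟨n - 1, by omega⟩
  exact (Triangle.isZero₁_iff_isIso₂ _ (d.triangle_mem k X)).1 (d.isZero_τle_of_ge hX)

lemma isZero_H_iff (n : ℤ) (X : C) :
    IsZero ((d.H n).obj X) ↔ IsZero ((d.τle n).obj ((d.τge n).obj X)) :=
  ⟨IsZero.of_full_of_faithful_of_isZero (shiftFunctor C n) _, (shiftFunctor C n).map_isZero⟩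

lemma isZero_H_succ_iff_of_le {n : ℤ} (hX : t.le (n + 1) X) :
    IsZero ((d.H (n + 1)).obj X) ↔ IsZero ((d.τge (n + 1)).obj X) := by
  have := d.isIso_ι_of_le (d.le_τge_obj (n := n) hX (by omega))
  exact (d.isZero_H_iff _ X).trans (asIso ((d.ι (n + 1)).app _)).isZero_iff

lemma isZero_H_iff_of_ge {n : ℤ} (hX : t.ge n X) :
    IsZero ((d.H n).obj X) ↔ IsZero ((d.τle n).obj X) := by
  have := d.isIso_π_of_ge hX
  exact (d.isZero_H_iff n X).trans ((d.τle n).mapIso (asIso ((d.π n).app X))).symm.isZero_iff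

lemma H_mem_heart (n : ℤ) (X : C) : Heart t ((d.H n).obj X) :=
  ⟨t.le_shift n n 0 (by omega) _ (d.τle_mem n _),
    t.ge_shift n n 0 (by omega) _ (d.ge_τle_obj (d.τge_mem n X) (by omega))⟩

lemma isZero_H_of_le {n i : ℤ} (hX : t.le n X) (hi : n < i) : IsZero ((d.H i).obj X) := by
  obtain ⟨k, rfl⟩ : ∃ k, i = k + 1 := ⟨i - 1, by omega⟩
  exact (d.isZero_H_succ_iff_of_le (t.le_monotone (by omega) _ hX)).2
    (d.isZero_τge_of_le (t.le_monotone (by omega) _ hX))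

lemma isZero_H_of_ge {n i : ℤ} (hX : t.ge n X) (hi : i < n) : IsZero ((d.H i).obj X) :=
  (d.isZero_H_iff_of_ge (t.ge_antitone hi.le _ hX)).2
    (d.isZero_τle_of_ge (t.ge_antitone (by omega) _ hX))

lemma le_of_isZero_H {n : ℤ} (hX : t.le (n + 1) X) (hH : IsZero ((d.H (n + 1)).obj X)) :
    t.le n X :=
  (d.le_iff_isZero_τge n X).2 ((d.isZero_H_succ_iff_of_le hX).1 hH)

lemma ge_of_isZero_H {n : ℤ} (hX : t.ge n X) (hH : IsZero ((d.H n).obj X)) :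
    t.ge (n + 1) X :=
  (d.ge_iff_isZero_τle n X).2 ((d.isZero_H_iff_of_ge hX).1 hH)

lemma le_of_forall_isZero_H {b n : ℤ} (hX : t.le b X)
    (hH : ∀ i, n < i → IsZero ((d.H i).obj X)) : t.le n X := by
  have descend : ∀ b, n ≤ b → t.le b X → t.le n X := by
    intro b hb
    induction b, hb using Int.leInduction with
    | base => exact id
    | succ b hb ih => exact fun hX => ih (d.le_of_isZero_H hX (hH _ (by omega)))
  exact descend (max b n) (le_max_right b n) (t.le_monotone (le_max_left b n) _ hX)

lemma ge_of_forall_isZero_H {a n : ℤ} (hX : t.ge a X)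
    (hH : ∀ i, i < n → IsZero ((d.H i).obj X)) : t.ge n X := by
  have ascend : ∀ a, a ≤ n → t.ge a X → t.ge n X := by
    intro a ha
    induction a, ha using Int.leInductionDown with
    | base => exact id
    | pred a ha ih =>
      intro hX
      have := d.ge_of_isZero_H hX (hH _ (by omega))
      rw [sub_add_cancel] at this
      exact ih this
  exact ascend (min a n) (min_le_right a n) (t.ge_antitone (min_le_left a n) _ hX)

lemma heart_of_forall_isZero_H {a b : ℤ} (hb : t.le b X) (ha : t.ge a X)
    (hH : ∀ i, i ≠ 0 → IsZero ((d.H i).obj X)) : Heart t X :=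
  ⟨d.le_of_forall_isZero_H hb fun i hi => hH i (by omega),
    d.ge_of_forall_isZero_H ha fun i hi => hH i (by omega)⟩

noncomputable def isoHZeroOfHeart (hX : Heart t X) : X ≅ (d.H 0).obj X :=
  have := d.isIso_π_of_ge hX.2
  have := d.isIso_ι_of_le ((t.le 0).prop_of_iso (asIso ((d.π 0).app X)) hX.1)
  asIso ((d.π 0).app X) ≪≫ (asIso ((d.ι 0).app ((d.τge 0).obj X))).symm ≪≫
    ((shiftFunctorZero C ℤ).app _).symm

end TruncData

section Monoidal

variable {C : Type*} [Category C] [Preadditive C] [HasZeroObject C] [HasShift C ℤ]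
  [∀ n : ℤ, (shiftFunctor C n).Additive] [Pretriangulated C] [MonoidalCategory C]
  {t : TStructure C} {d : TruncData C t}

lemma Kunneth.isZero_tensor_of_isZero_H (hd : Kunneth d) {n : ℤ} {X Y : C}
    (h : IsZero ((d.H n).obj (X ⊗ Y))) (q : ℤ) :
    IsZero ((d.H q).obj X ⊗ (d.H (n - q)).obj Y) := by
  obtain ⟨p, ⟨hp⟩⟩ := hd n X Y
  exact isZero_of_isLimit_fan hp h q

lemma isZero_H_of_isZero_H_two_mul (hd : Kunneth d) (hred : TensorReduced t) {X : C}
    (e : X ⊗ X ≅ X) {m : ℤ} (h : IsZero ((d.H (2 * m)).obj X)) : IsZero ((d.H m).obj X) := by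
  have hsq := hd.isZero_tensor_of_isZero_H (h.of_iso ((d.H (2 * m)).mapIso e)) m
  rw [show 2 * m - m = m by ring] at hsq
  exact hred _ (d.H_mem_heart m X) hsq

lemma heart_of_tensor_self_iso (ht : IsBounded t) (hd : Kunneth d) (hred : TensorReduced t)
    {X : C} (e : X ⊗ X ≅ X) :
    (∀ i : ℤ, i ≠ 0 → IsZero ((d.H i).obj X)) ∧ Heart t X := by
  obtain ⟨a, b, hb, ha⟩ := ht X
  have hH : ∀ i : ℤ, i ≠ 0 → IsZero ((d.H i).obj X) := by
    intro i hi
    by_contra hne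
    refine hi (eq_zero_of_mem_of_two_mul_mem (S := {i | ¬ IsZero ((d.H i).obj X)})
      ⟨a, fun j hj => not_lt.1 fun hja => hj (d.isZero_H_of_ge ha hja)⟩
      ⟨b, fun j hj => not_lt.1 fun hbj => hj (d.isZero_H_of_le hb hbj)⟩
      (fun m hm h2m => hm (isZero_H_of_isZero_H_two_mul hd hred e h2m)) hne)
  exact ⟨hH, d.heart_of_forall_isZero_H hb ha hH⟩

end Monoidal

/-- For a tensor reduced monoidal t-structure `t`, one has `H^i(𝟙) = 0` for all
`i ≠ 0`; hence the unit object lies in the heart and `𝟙 ≅ H^0(𝟙)`. -/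
theorem statement10 {C : Type*} [Category C] [Preadditive C] [HasZeroObject C] [HasShift C ℤ]
    [∀ n : ℤ, (shiftFunctor C n).Additive] [Pretriangulated C] [MonoidalCategory C]
    [MonoidalTriangulated C] (hC : ∃ X : C, ¬ IsZero X)
    (t : TStructure C) (ht : IsBounded t) (d : TruncData C t) (hd : Kunneth d)
    (h0 : (0 : ℤ) ∈ dev C t 0) (hred : TensorReduced t) :
    (∀ i : ℤ, i ≠ 0 → IsZero ((d.H i).obj (𝟙_ C))) ∧
    Heart t (𝟙_ C) ∧ Nonempty ((𝟙_ C) ≅ (d.H 0).obj (𝟙_ C)) := by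
  obtain ⟨hH, hheart⟩ := heart_of_tensor_self_iso ht hd hred (λ_ (𝟙_ C))
  exact ⟨hH, hheart, ⟨d.isoHZeroOfHeart hheart⟩⟩

end Paper
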